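/- arXiv:0810.1639 — 4 statements merged into one kernel-verified Lean document; each statement's English description precedes it below -/
import Mathlib

section
/- In the greedy partition of a sequence into increasing lists, each list is strictly increasing, and hence any strictly decreasing subsequence of the input contains at most one element from each list; consequently the number of lists created is at least LDS(A). -/
/-- One step of the greedy patience algorithm: append `x` to the first list whose
last element is smaller than `x`, or start a new list. Lists are kept in order of
creation and each list stores its elements in arrival order. -/
def greedyStep (x : ℕ) : List (List ℕ) → List (List ℕ)
  | [] => [[x]]
  | L :: rest => if L.getLastI < x then (L ++ [x]) :: rest else L :: greedyStep x rest

/-- Greedy partition of a sequence into increasing lists `L₁, L₂, …`. -/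
def greedy (A : List ℕ) : List (List ℕ) := A.foldl (fun s x => greedyStep x s) []

/-- `LDS(A)`: length of the longest strictly decreasing subsequence of `A`. -/
noncomputable def ldsL (A : List ℕ) : ℕ :=
  sSup {m | ∃ l : List ℕ, l.Sublist A ∧ l.Pairwise (· > ·) ∧ l.length = m}

/-- `A` can be partitioned (via a coloring of positions) into `k` strictly
increasing subsequences. -/
def SUSleL (A : List ℕ) (k : ℕ) : Prop :=
  ∃ c : ℕ → ℕ, (∀ i < A.length, c i < k) ∧
    ∀ i j, i < j → j < A.length → c i = c j → A.getD i 0 < A.getD j 0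

/-- `SUS(A)`: minimum number of increasing subsequences partitioning `A`. -/
noncomputable def susL (A : List ℕ) : ℕ := sInf {k | SUSleL A k}

/-- Least positive integer not occurring in `P` (the ACK value after receiving `P`). -/
noncomputable def ackL (P : List ℕ) : ℕ := sInf {k | 0 < k ∧ k ∉ P}

/-- Maximum of a list of naturals (0 for the empty list). -/
def maxL (P : List ℕ) : ℕ := P.foldr max 0

/-- Buffer size after receiving the packets `P`: `max P - (ackL P - 1)`. -/
noncomputable def bufL (P : List ℕ) : ℤ := (maxL P : ℤ) - ackL P + 1

/-!
A greedy list only ever grows by appending an element larger than its current last element,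
so it is strictly increasing, and it is a subsequence of `A`. When the entries of `A` are
distinct, any two subsequences list their common elements in the same order, so a decreasing
and an increasing subsequence share at most one element. As every element of `A` lies in some
greedy list, a decreasing subsequence meets each list at most once and therefore has at most
as many elements as there are lists.
-/

theorem List.Pairwise.le_getLastI {α : Type*} [Preorder α] [Inhabited α] {L : List α}
    (h : L.Pairwise (· < ·)) {a : α} (ha : a ∈ L) : a ≤ L.getLastI := by
  rw [List.getLastI_eq_getLast?_getD, List.getLast?_eq_some_getLast (List.ne_nil_of_mem ha),
    Option.getD_some]
  exact (h.imp le_of_lt).rel_getLast ha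

theorem mem_greedyStep {x : ℕ} {s : List (List ℕ)} {M : List ℕ} (hM : M ∈ greedyStep x s) :
    M ∈ s ∨ M = [x] ∨ ∃ L ∈ s, L.getLastI < x ∧ M = L ++ [x] := by
  induction s with
  | nil => simp_all [greedyStep]
  | cons L rest ih =>
    unfold greedyStep at hM
    split_ifs at hM <;> grind

theorem flatten_greedyStep_perm (x : ℕ) (s : List (List ℕ)) :
    (greedyStep x s).flatten.Perm (s.flatten ++ [x]) := by
  induction s with
  | nil => simp [greedyStep]
  | cons L rest ih =>
    unfold greedyStep
    split_ifs
    · simpa using (List.perm_append_singleton x _).symm.append_left L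
    · simpa using ih.append_left L

theorem greedy_append_singleton (A : List ℕ) (x : ℕ) :
    greedy (A ++ [x]) = greedyStep x (greedy A) := by
  simp [greedy, List.foldl_append]

theorem flatten_greedy_perm (A : List ℕ) : (greedy A).flatten.Perm A := by
  induction A using List.reverseRecOn with
  | nil => simp [greedy]
  | append_singleton A x ih =>
    rw [greedy_append_singleton]
    exact (flatten_greedyStep_perm x _).trans (ih.append_right [x])

theorem pairwise_of_mem_greedy {A : List ℕ} {L : List ℕ} (hL : L ∈ greedy A) :
    L.Pairwise (· < ·) := by
  induction A using List.reverseRecOn generalizing L with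
  | nil => simp [greedy] at hL
  | append_singleton A x ih =>
    rw [greedy_append_singleton] at hL
    obtain hL | rfl | ⟨M, hM, hlast, rfl⟩ := mem_greedyStep hL
    · exact ih hL
    · exact List.pairwise_singleton _ x
    · refine List.pairwise_append.mpr ⟨ih hM, List.pairwise_singleton _ x, ?_⟩
      simp only [List.mem_singleton, forall_eq]
      exact fun a ha => ((ih hM).le_getLastI ha).trans_lt hlast

theorem sublist_of_mem_greedy {A : List ℕ} {L : List ℕ} (hL : L ∈ greedy A) : L.Sublist A := by
  induction A using List.reverseRecOn generalizing L with
  | nil => simp [greedy] at hL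
  | append_singleton A x ih =>
    rw [greedy_append_singleton] at hL
    obtain hL | rfl | ⟨M, hM, -, rfl⟩ := mem_greedyStep hL
    · exact (ih hL).trans (List.sublist_append_left A [x])
    · exact List.sublist_append_right A [x]
    · exact (ih hM).append (List.Sublist.refl [x])

theorem exists_mem_greedy_of_mem {A : List ℕ} {a : ℕ} (ha : a ∈ A) : ∃ L ∈ greedy A, a ∈ L :=
  List.mem_flatten.mp ((flatten_greedy_perm A).mem_iff.mpr ha)

theorem List.Nodup.filter_mem_eq_of_sublist {α : Type*} [DecidableEq α] {A L : List α}
    (hA : A.Nodup) (hL : L.Sublist A) : A.filter (· ∈ L) = L := by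
  refine (hA.perm_iff_eq_of_sublist List.filter_sublist hL).mp ?_
  refine (List.perm_ext_iff_of_nodup (hA.sublist List.filter_sublist) (hA.sublist hL)).mpr ?_
  intro a
  simpa using fun haL => hL.subset haL

theorem List.length_le_one_of_pairwise {α : Type*} {R : α → α → Prop} {l : List α}
    (h : l.Pairwise R) (hR : ∀ a b, ¬ R a b) : l.length ≤ 1 := by
  match l, h with
  | [], _ | [_], _ => simp
  | a :: b :: _, h => exact absurd (List.rel_of_pairwise_cons h (List.mem_cons_self ..)) (hR a b)

theorem List.Nodup.filter_mem_length_le_one {α : Type*} [Preorder α] [DecidableEq α]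
    {A l L : List α} (hA : A.Nodup) (hl : l.Sublist A) (hL : L.Sublist A)
    (hdec : l.Pairwise (· > ·)) (hinc : L.Pairwise (· < ·)) :
    (l.filter (· ∈ L)).length ≤ 1 := by
  have hsubL : (l.filter (· ∈ L)).Sublist L := by
    simpa only [hA.filter_mem_eq_of_sublist hL] using hl.filter (· ∈ L)
  refine List.length_le_one_of_pairwise
    ((hdec.sublist List.filter_sublist).and (hinc.sublist hsubL)) ?_
  exact fun a b ⟨hgt, hlt⟩ => lt_asymm hgt hlt

theorem List.length_le_of_forall_filter_mem_length_le_one {α : Type*} [DecidableEq α]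
    {s : List (List α)} {l : List α} (hcov : ∀ a ∈ l, ∃ L ∈ s, a ∈ L)
    (hmeet : ∀ L ∈ s, (l.filter (· ∈ L)).length ≤ 1) : l.length ≤ s.length := by
  induction s generalizing l with
  | nil =>
    cases l with
    | nil => simp
    | cons a _ => simpa using hcov a List.mem_cons_self
  | cons L rest ih =>
    have hrest : (l.filter (· ∉ L)).length ≤ rest.length := by
      refine ih (fun a ha => ?_) (fun M hM => ?_)
      · simp only [List.mem_filter, decide_eq_true_eq] at ha
        obtain ⟨M, hM, haM⟩ := hcov a ha.1
        rcases List.mem_cons.mp hM with rfl | hM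
        · exact absurd haM ha.2
        · exact ⟨M, hM, haM⟩
      · refine le_trans ?_ (hmeet M (List.mem_cons_of_mem L hM))
        exact (List.filter_sublist.filter _).length_le
    have hL := hmeet L List.mem_cons_self
    have hsplit := l.length_eq_length_filter_add (· ∈ L)
    simp only [decide_not] at hrest
    rw [List.length_cons]
    omega

/-- each greedy list is strictly increasing, any strictly decreasing
subsequence meets each list in at most one element, and hence the number of lists
created is at least `LDS(A)`. -/
theorem greedy_lists_increasing (A : List ℕ) (hA : A.Nodup) :
    (∀ L ∈ greedy A, L.Pairwise (· < ·)) ∧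
    (∀ l : List ℕ, l.Sublist A → l.Pairwise (· > ·) →
      ∀ L ∈ greedy A, (l.filter (fun x => x ∈ L)).length ≤ 1) ∧
    ldsL A ≤ (greedy A).length := by
  have meets : ∀ l : List ℕ, l.Sublist A → l.Pairwise (· > ·) →
      ∀ L ∈ greedy A, (l.filter (fun x => x ∈ L)).length ≤ 1 :=
    fun l hl hdec L hL =>
      hA.filter_mem_length_le_one hl (sublist_of_mem_greedy hL) hdec (pairwise_of_mem_greedy hL)
  refine ⟨fun L hL => pairwise_of_mem_greedy hL, meets, ?_⟩
  refine csSup_le ⟨0, [], List.nil_sublist A, List.Pairwise.nil, rfl⟩ ?_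
  rintro m ⟨l, hl, hdec, rfl⟩
  exact List.length_le_of_forall_filter_mem_length_le_one
    (fun a ha => exists_mem_greedy_of_mem (hl.subset ha)) (meets l hl hdec)
end

section
/- Let A be a permutation with buffer sequence w = M(A). If w_i < w_{i-1} (the buffer shrinks at stage i), then A_i = ACK_{i-1} (the new element is the smallest previously-missing ID), and all IDs up to ACK_{i-1} + (w_{i-1} - w_i - 1) appear among A_1,...,A_i. -/
/-- The set of values appearing in the first `i` entries of `A` (indices `1..i`). -/
def prefSet (A : ℕ → ℕ) (i : ℕ) : Finset ℕ := (Finset.Icc 1 i).image A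

/-- `H_i`: the maximum value among the first `i` entries (0 for `i = 0`). -/
def hi (A : ℕ → ℕ) (i : ℕ) : ℕ := (prefSet A i).sup id

/-- `ACK_i`: the least positive integer not among the first `i` entries. -/
noncomputable def ackSeq (A : ℕ → ℕ) (i : ℕ) : ℕ := sInf {k | 0 < k ∧ k ∉ prefSet A i}

/-- The buffer size `M_i = H_i - (ACK_i - 1)`. -/
noncomputable def buf (A : ℕ → ℕ) (i : ℕ) : ℤ := (hi A i : ℤ) - ackSeq A i + 1

/-- `A` restricted to `{1,...,n}` is a permutation of `{1,...,n}`. -/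
def IsPermOn (A : ℕ → ℕ) (n : ℕ) : Prop := Set.BijOn A (Set.Icc 1 n) (Set.Icc 1 n)

/-- The positions `1..n` can be partitioned into `k` classes, each of which
induces a strictly increasing subsequence of `A`. -/
def SUSle (A : ℕ → ℕ) (n k : ℕ) : Prop :=
  ∃ c : ℕ → ℕ, (∀ i ∈ Finset.Icc 1 n, c i < k) ∧
    ∀ i j, i ∈ Finset.Icc 1 n → j ∈ Finset.Icc 1 n → i < j → c i = c j → A i < A j

/-- `SUS(A)`: minimum number of increasing subsequences partitioning `A₁,…,Aₙ`. -/
noncomputable def sus (A : ℕ → ℕ) (n : ℕ) : ℕ := sInf {k | SUSle A n k}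

/-- `LDS(A)`: maximum length of a strictly decreasing subsequence of `A₁,…,Aₙ`. -/
noncomputable def lds (A : ℕ → ℕ) (n : ℕ) : ℕ :=
  sSup {m | ∃ s : Fin m → ℕ, StrictMono s ∧ (∀ t, s t ∈ Finset.Icc 1 n) ∧
    ∀ t u : Fin m, t < u → A (s u) < A (s t)}

/-!
`H` is monotone in the stage, so `w_i - w_j = (H_i - H_j) + (ACK_j - ACK_i) ≤ ACK_j - ACK_i`
for `i ≤ j`. A shrinking buffer therefore forces `ACK` to grow by at least the amount of
shrinkage, which puts `ACK_{i-1}` and every ID below `ACK_{i-1} + (w_{i-1} - w_i)` into the first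
`i` entries; as `ACK_{i-1}` was missing before stage `i`, it must be `A_i`.
-/

lemma prefSet_mono (A : ℕ → ℕ) {i j : ℕ} (h : i ≤ j) : prefSet A i ⊆ prefSet A j :=
  Finset.image_subset_image (Finset.Icc_subset_Icc le_rfl h)

lemma prefSet_succ (A : ℕ → ℕ) (i : ℕ) :
    prefSet A (i + 1) = insert (A (i + 1)) (prefSet A i) := by
  rw [prefSet, ← Finset.insert_Icc_right_eq_Icc_add_one (Nat.le_add_left 1 i),
    Finset.image_insert, prefSet]

lemma eq_of_mem_prefSet_succ_of_notMem {A : ℕ → ℕ} {i x : ℕ} (hx : x ∈ prefSet A (i + 1))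
    (hx' : x ∉ prefSet A i) : x = A (i + 1) := by
  rw [prefSet_succ, Finset.mem_insert] at hx
  exact hx.resolve_right hx'

lemma hi_mono (A : ℕ → ℕ) {i j : ℕ} (h : i ≤ j) : hi A i ≤ hi A j :=
  Finset.sup_mono (prefSet_mono A h)

lemma ackSeq_spec (A : ℕ → ℕ) (i : ℕ) : 0 < ackSeq A i ∧ ackSeq A i ∉ prefSet A i := by
  refine Nat.sInf_mem (s := {k | 0 < k ∧ k ∉ prefSet A i})
    ⟨hi A i + 1, Nat.succ_pos _, fun h => ?_⟩
  have : hi A i + 1 ≤ hi A i := Finset.le_sup (f := id) h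
  omega

lemma mem_prefSet_of_lt_ackSeq {A : ℕ → ℕ} {i k : ℕ} (hk : 0 < k) (h : k < ackSeq A i) :
    k ∈ prefSet A i := by
  by_contra hmem
  exact (Nat.sInf_le ⟨hk, hmem⟩ : ackSeq A i ≤ k).not_gt h

lemma ackSeq_add_buf_sub_buf_le (A : ℕ → ℕ) {i j : ℕ} (h : i ≤ j) :
    (ackSeq A i : ℤ) + (buf A i - buf A j) ≤ ackSeq A j := by
  have := hi_mono A h
  simp only [buf]
  omega

theorem buffer_shrinks_general (A : ℕ → ℕ)
    (i : ℕ) (hshrink : buf A i < buf A (i - 1)) :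
    A i = ackSeq A (i - 1) ∧
      ∀ k : ℕ, 1 ≤ k → (k : ℤ) ≤ ackSeq A (i - 1) + (buf A (i - 1) - buf A i - 1) →
        k ∈ prefSet A i := by
  obtain ⟨m, rfl⟩ : ∃ m, i = m + 1 :=
    Nat.exists_eq_succ_of_ne_zero (by rintro rfl; exact lt_irrefl _ hshrink)
  rw [Nat.add_sub_cancel] at hshrink ⊢
  have hgap := ackSeq_add_buf_sub_buf_le A (Nat.le_add_right m 1)
  obtain ⟨hpos, hmissing⟩ := ackSeq_spec A m
  refine ⟨(eq_of_mem_prefSet_succ_of_notMem ?_ hmissing).symm, fun k hk hk' => ?_⟩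
  · exact mem_prefSet_of_lt_ackSeq hpos (by omega)
  · exact mem_prefSet_of_lt_ackSeq hk (by omega)

/-- if the buffer shrinks at stage `i`, then `A_i = ACK_{i-1}` and
every ID `k ≤ ACK_{i-1} + (w_{i-1} - w_i - 1)` appears among `A_1,…,A_i`. -/
theorem buffer_shrinks (n : ℕ) (A : ℕ → ℕ) (hA : IsPermOn A n)
    (i : ℕ) (hi1 : i ∈ Finset.Icc 1 n) (hshrink : buf A i < buf A (i - 1)) :
    A i = ackSeq A (i - 1) ∧
      ∀ k : ℕ, 1 ≤ k → (k : ℤ) ≤ ackSeq A (i - 1) + (buf A (i - 1) - buf A i - 1) →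
        k ∈ prefSet A i :=
  buffer_shrinks_general A i hshrink
end

section
/- Let A be a permutation with SUS(A) ≤ 3, run under the greedy increasing-list partition. If element A_i is placed into list L_3 and A_i > ACK_{i-1}, then the element equal to ACK_{i-1}, which arrives at some later stage, cannot be placed in L_1, L_2 or L_3, forcing SUS(A) ≥ 4 — a contradiction. Hence any element placed in L_3 equals the current smallest missing ID. -/
/-!
The greedy lists satisfy the patience-sorting invariant: the last element of the `k`-th list
ends a nonincreasing subsequence of length `k + 1` of the input read so far, because an element
goes to list `k + 1` only when it is at most the last element of list `k`. So an element `x`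
placed into `L₃` ends a decreasing subsequence of length 3. A decreasing subsequence meets each
increasing one at most once, so with `SUS(A) ≤ 3` no later element can be smaller than `x`.
Since `A` is a permutation of `1, …, n`, the smallest ID missing before `x` arrives is `x` or
arrives later; it is at most `x` because `x` itself is missing, and hence equal to `x`.
-/

theorem getElem?_greedyStep_eq_some {x : ℕ} {s : List (List ℕ)} {m : ℕ} {L : List ℕ}
    (h : (greedyStep x s)[m]? = some L) :
    s[m]? = some L ∨
      L.getLastI = x ∧ ∀ j, m = j + 1 → ∃ M, s[j]? = some M ∧ x ≤ M.getLastI := by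
  induction s generalizing m with
  | nil =>
    cases m with
    | zero =>
      obtain rfl : [x] = L := by simpa [greedyStep] using h
      simp [List.getLastI]
    | succ m => simp [greedyStep] at h
  | cons L₀ rest ih =>
    by_cases hlt : L₀.getLastI < x
    · rw [greedyStep, if_pos hlt] at h
      cases m with
      | zero =>
        simp only [List.getElem?_cons_zero, Option.some.injEq] at h
        simp [← h, List.getLastI_eq_getLast?_getD]
      | succ m => exact .inl h
    · rw [greedyStep, if_neg hlt] at h
      cases m with
      | zero => exact .inl h
      | succ m =>
        refine (ih h).imp id fun ⟨hx, hprev⟩ => ⟨hx, fun j hj => ?_⟩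
        obtain rfl : m = j := by omega
        cases m with
        | zero => exact ⟨L₀, rfl, by omega⟩
        | succ j => exact hprev j rfl

def EndsAntitoneChains (P : List ℕ) (s : List (List ℕ)) : Prop :=
  ∀ k L, s[k]? = some L → ∃ l : List ℕ, l.Sublist P ∧ l.IsChain (· ≥ ·) ∧
    l.length = k + 1 ∧ l.getLast? = some L.getLastI

theorem EndsAntitoneChains.greedyStep {P : List ℕ} {s : List (List ℕ)} (x : ℕ)
    (h : EndsAntitoneChains P s) : EndsAntitoneChains (P ++ [x]) (greedyStep x s) := by
  intro m L hm
  rcases getElem?_greedyStep_eq_some hm with hold | ⟨hx, hprev⟩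
  · obtain ⟨l, hsub, hchain, hlen, hlast⟩ := h m L hold
    exact ⟨l, hsub.trans (List.sublist_append_left P [x]), hchain, hlen, hlast⟩
  cases m with
  | zero =>
    exact ⟨[x], List.sublist_append_right P [x], List.isChain_singleton x, rfl, by simp [hx]⟩
  | succ j =>
    obtain ⟨M, hM, hxM⟩ := hprev j rfl
    obtain ⟨l, hsub, hchain, hlen, hlast⟩ := h j M hM
    refine ⟨l ++ [x], hsub.append (List.Sublist.refl [x]), ?_, by simp [hlen], by simp [hx]⟩
    exact hchain.append (List.isChain_singleton x) (by simpa [hlast] using hxM)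

theorem endsAntitoneChains_greedy (P : List ℕ) : EndsAntitoneChains P (greedy P) := by
  induction P using List.reverseRecOn with
  | nil => intro k L hk; simp [greedy] at hk
  | append_singleton Q x ih =>
    rw [greedy, List.foldl_append]
    exact ih.greedyStep x

theorem SUSleL.mono {A : List ℕ} {k m : ℕ} (h : SUSleL A k) (hkm : k ≤ m) : SUSleL A m :=
  let ⟨c, hc_lt, hc_inc⟩ := h
  ⟨c, fun i hi => (hc_lt i hi).trans_le hkm, hc_inc⟩

theorem SUSleL_susL (A : List ℕ) : SUSleL A (susL A) :=
  Nat.sInf_mem (s := {k | SUSleL A k})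
    ⟨A.length, id, fun _ hi => hi, fun _ _ hij _ hc => absurd hc hij.ne⟩

theorem SUSleL.length_le_of_sublist {A l : List ℕ} {k : ℕ} (hA : SUSleL A k)
    (hl : l.Sublist A) (hdec : l.Pairwise (· > ·)) : l.length ≤ k := by
  obtain ⟨c, hc_lt, hc_inc⟩ := hA
  obtain ⟨is, rfl, hinc⟩ := List.sublist_eq_map_getElem hl
  have hnd : (is.map fun p : Fin A.length => c p).Nodup := by
    refine List.pairwise_map.2 ((hinc.and (List.pairwise_map.1 hdec)).imp ?_)
    rintro p q ⟨hpq, hgt⟩ hc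
    have := hc_inc p q hpq q.isLt hc
    rw [Fin.getElem_fin, Fin.getElem_fin] at hgt
    simp only [List.getD_eq_getElem A 0 p.isLt, List.getD_eq_getElem A 0 q.isLt] at this
    omega
  have hsub : (is.map fun p : Fin A.length => c p).toFinset ⊆ Finset.range k := by
    intro y hy
    obtain ⟨p, -, rfl⟩ := List.mem_map.1 (List.mem_toFinset.1 hy)
    exact Finset.mem_range.2 (hc_lt p p.isLt)
  simpa [List.toFinset_card_of_nodup hnd] using Finset.card_le_card hsub

theorem le_of_mem_of_lands_in_last_list {P S L : List ℕ} {x k : ℕ}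
    (hnd : (P ++ x :: S).Nodup) (hsus : SUSleL (P ++ x :: S) (k + 1))
    (hL : (greedy (P ++ [x]))[k]? = some L) (hx : L.getLastI = x) {y : ℕ} (hy : y ∈ S) :
    x ≤ y := by
  by_contra! hyx
  obtain ⟨l, hsub, hchain, hlen, hlast⟩ := endsAntitoneChains_greedy _ k L hL
  have hsub' : (l ++ [y]).Sublist (P ++ x :: S) := by
    simpa using hsub.append (List.singleton_sublist.2 hy)
  have hchain' : (l ++ [y]).IsChain (· ≥ ·) :=
    hchain.append (List.isChain_singleton y) (by simpa [hlast, hx] using hyx.le)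
  have hdec : (l ++ [y]).Pairwise (· > ·) :=
    (hchain'.pairwise.and (hnd.sublist hsub')).imp fun ⟨hge, hne⟩ => lt_of_le_of_ne hge hne.symm
  have := hsus.length_le_of_sublist hsub' hdec
  simp only [List.length_append, List.length_singleton, hlen] at this
  omega

theorem ackL_le_of_notMem {P : List ℕ} {m : ℕ} (h0 : 0 < m) (hm : m ∉ P) : ackL P ≤ m :=
  Nat.sInf_le ⟨h0, hm⟩

theorem ackL_eq_of_perm_of_forall_le {P S : List ℕ} {x n : ℕ}
    (hperm : (P ++ x :: S).Perm (List.range' 1 n)) (hlater : ∀ y ∈ S, x ≤ y) : ackL P = x := by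
  have hmem : ∀ m, m ∈ P ++ x :: S ↔ 1 ≤ m ∧ m < 1 + n :=
    fun m => hperm.mem_iff.trans List.mem_range'_1
  have hxP : x ∉ P := fun h =>
    (List.nodup_append.1 (hperm.nodup_iff.2 List.nodup_range')).2.2 x h x List.mem_cons_self rfl
  obtain ⟨hx0, hxn⟩ := (hmem x).1 (List.mem_append_right P List.mem_cons_self)
  refine le_antisymm (ackL_le_of_notMem hx0 hxP) (not_lt.1 fun hlt => ?_)
  have hack : 0 < ackL P ∧ ackL P ∉ P := Nat.sInf_mem (s := {k | 0 < k ∧ k ∉ P})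
    ⟨x, hx0, hxP⟩
  have hackA := (hmem (ackL P)).2 ⟨hack.1, by omega⟩
  simp only [List.mem_append, List.mem_cons] at hackA
  rcases hackA with hP | heq | hS
  · exact hack.2 hP
  · omega
  · exact absurd (hlater _ hS) (not_le.2 hlt)

/-- for a permutation with `SUS(A) ≤ 3`, an element placed into the
third list cannot exceed the current smallest missing ID (otherwise that missing
ID, arriving later, would force a fourth list and `SUS(A) ≥ 4`); hence any element
placed in `L_3` equals the current smallest missing ID. -/
theorem third_list_elem_eq_smallest_missing (n : ℕ) (A : List ℕ)
    (hA : A.Perm (List.range' 1 n)) (hsus : susL A ≤ 3)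
    (i : ℕ) (h1 : 1 ≤ i) (hn : i ≤ A.length)
    (h3 : 2 < (greedy (A.take i)).length)
    (hplace : ((greedy (A.take i))[2]'h3).getLastI = A.getD (i - 1) 0) :
    ¬ ackL (A.take (i - 1)) < A.getD (i - 1) 0 ∧
      A.getD (i - 1) 0 = ackL (A.take (i - 1)) := by
  obtain ⟨j, rfl⟩ : ∃ j, i = j + 1 := ⟨i - 1, by omega⟩
  have hj : j < A.length := by omega
  simp only [Nat.add_sub_cancel] at hplace ⊢
  generalize hx : A.getD j 0 = x at hplace ⊢
  rw [List.getD_eq_getElem _ _ hj] at hx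
  have hsplit : A = A.take j ++ x :: A.drop (j + 1) := by
    rw [← hx, ← List.drop_eq_getElem_cons, List.take_append_drop]
  have hperm : (A.take j ++ x :: A.drop (j + 1)).Perm (List.range' 1 n) := hsplit ▸ hA
  obtain ⟨L, hL, hLx⟩ : ∃ L, (greedy (A.take j ++ [x]))[2]? = some L ∧ L.getLastI = x := by
    rw [← hx, List.take_append_getElem]
    exact ⟨_, List.getElem?_eq_getElem h3, hx ▸ hplace⟩
  have hlater : ∀ y ∈ A.drop (j + 1), x ≤ y := fun y hy =>
    le_of_mem_of_lands_in_last_list (hperm.nodup_iff.2 List.nodup_range')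
      (hsplit ▸ (SUSleL_susL A).mono hsus) hL hLx hy
  rw [ackL_eq_of_perm_of_forall_le hperm hlater]
  exact ⟨lt_irrefl x, rfl⟩
end

section
/- For the permutations A = (4,3,2,1) and B = (4,2,3,1), the multisets of displacements {A_i - i : i} and {B_i - i : i} are {-3,-1,1,3} and {-3,0,0,3} respectively; for every choice of truncation threshold DT ∈ {1,2,...} ∪ {∞}, the displacement distributions restricted to [-DT, DT] differ. Since M(A) = M(B), the reorder-density measure RD is not consistent with respect to the equivalence ≡_FB, for any value of DT. -/
/-- The multiset of displacements `P_i - i` (positions counted from 1). -/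
def disp (P : List ℕ) : Multiset ℤ :=
  ↑((P.zipIdx.map Prod.swap).map (fun p => (p.2 : ℤ) - ((p.1 : ℤ) + 1)))

/-- Reorder density with threshold `DT ∈ {1,2,…} ∪ {∞}`: the displacement
multiset restricted to values in `[-DT, DT]`. -/
def rd (P : List ℕ) (DT : ℕ∞) : Multiset ℤ :=
  (disp P).filter (fun v => (v.natAbs : ℕ∞) ≤ DT)

/-!
Displacement `0` marks a fixed point. `(4,2,3,1)` fixes `2` and `3`, `(4,3,2,1)` fixes nothing, and
`0` survives every truncation, so the reorder densities differ for every `DT`. The buffer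
sequences agree because packet `1` arrives last in both: before that the ACK stays at `1` and
the buffer equals the running maximum, which is `4` from the first packet on; once all four
packets are in, both buffers are empty.
-/

lemma ackL_eq_of_forall_lt_mem {P : List ℕ} {k : ℕ} (hk : 0 < k) (hkP : k ∉ P)
    (hbelow : ∀ m, 0 < m → m < k → m ∈ P) : ackL P = k := by
  refine le_antisymm (Nat.sInf_le ⟨hk, hkP⟩) ?_
  by_contra! h
  have hmem := Nat.sInf_mem (⟨k, hk, hkP⟩ : Set.Nonempty {k | 0 < k ∧ k ∉ P})
  exact hmem.2 (hbelow _ hmem.1 h)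

lemma ackL_eq_one_of_one_not_mem {P : List ℕ} (h : 1 ∉ P) : ackL P = 1 :=
  ackL_eq_of_forall_lt_mem one_pos h (by omega)

lemma ackL_eq_of_perm_range' {P : List ℕ} {n : ℕ} (h : P.Perm (List.range' 1 n)) :
    ackL P = n + 1 := by
  apply ackL_eq_of_forall_lt_mem n.succ_pos <;> simp [h.mem_iff] <;> omega

lemma bufL_eq_maxL_of_one_not_mem {P : List ℕ} (h : 1 ∉ P) : bufL P = maxL P := by
  simp [bufL, ackL_eq_one_of_one_not_mem h]

lemma bufL_eq_of_perm_range' {P : List ℕ} {n : ℕ} (h : P.Perm (List.range' 1 n)) :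
    bufL P = (maxL P : ℤ) - n := by
  rw [bufL, ackL_eq_of_perm_range' h]
  push_cast
  ring

lemma mem_rd_iff_of_natAbs_le {P : List ℕ} {DT : ℕ∞} {v : ℤ} (hv : (v.natAbs : ℕ∞) ≤ DT) :
    v ∈ rd P DT ↔ v ∈ disp P := by
  simp [rd, hv]

lemma bufL_take_4321_eq_bufL_take_4231 (i : ℕ) :
    bufL (([4, 3, 2, 1] : List ℕ).take i) = bufL (([4, 2, 3, 1] : List ℕ).take i) := by
  rcases Nat.lt_or_ge i 4 with hi | hi
  · interval_cases i <;>
      rw [bufL_eq_maxL_of_one_not_mem (by simp), bufL_eq_maxL_of_one_not_mem (by simp)] <;> rfl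
  · rw [List.take_of_length_le (by simpa), List.take_of_length_le (by simpa),
      bufL_eq_of_perm_range' (n := 4) (by decide), bufL_eq_of_perm_range' (n := 4) (by decide)]
    rfl

/-- the permutations `(4,3,2,1)` and `(4,2,3,1)` have displacement
multisets `{-3,-1,1,3}` and `{-3,0,0,3}`, equal buffer sequences, and for every
threshold `DT` the truncated displacement distributions differ: the reorder
density RD is not consistent with respect to `≡_FB`, for any value of `DT`. -/
theorem rd_inconsistent :
    disp [4, 3, 2, 1] = ({-3, -1, 1, 3} : Multiset ℤ) ∧
    disp [4, 2, 3, 1] = ({-3, 0, 0, 3} : Multiset ℤ) ∧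
    (∀ i, bufL (([4, 3, 2, 1] : List ℕ).take i) = bufL (([4, 2, 3, 1] : List ℕ).take i)) ∧
    ∀ DT : ℕ∞, 1 ≤ DT → rd [4, 3, 2, 1] DT ≠ rd [4, 2, 3, 1] DT := by
  have dispA : disp [4, 3, 2, 1] = ({-3, -1, 1, 3} : Multiset ℤ) :=
    Multiset.coe_eq_coe.mpr (by decide)
  have dispB : disp [4, 2, 3, 1] = ({-3, 0, 0, 3} : Multiset ℤ) :=
    Multiset.coe_eq_coe.mpr (by decide)
  refine ⟨dispA, dispB, bufL_take_4321_eq_bufL_take_4231, fun DT _ h => ?_⟩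
  have hzero : ∀ P, (0 : ℤ) ∈ rd P DT ↔ 0 ∈ disp P := fun _ => mem_rd_iff_of_natAbs_le (by simp)
  have hB : (0 : ℤ) ∈ rd [4, 2, 3, 1] DT := (hzero _).mpr (by simp [dispB])
  rw [← h, hzero, dispA] at hB
  simp at hB
end
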